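/- Suppose that for every choice of l distinct indices μ = (μ_1,…,μ_l) with 1 ≤ μ_1 < … < μ_l ≤ m, the determinant det ε_n^{(μ,-)} tends to 0 as n → ∞. Suppose furthermore that for all integers θ^{(i)}, λ^{(i,j)} (i=1,…,l; j=1,…,m) such that the l×(m+1) integer matrix [θ | λ] has rank l, the l×l integer matrix θ·q_n + λ·p_n (where q_n is the 1×l row [q_n^{(ν)}], p_n is the m×l matrix [p_n^{(μ,ν)}], and θ is the l×1 column [θ^{(i)}]) is non-singular for infinitely many n. Then the dimension over ℚ of ℚ + ℚγ_1 + ⋯ + ℚγ_m is at least 2 + m − l. -/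

import Mathlib

open Filter Matrix


/-- Clearing denominators of a finite family of rationals. -/
lemma aux_exists_int_smul {k : ℕ} (v : Fin k → ℚ) :
    ∃ (N : ℕ) (z : Fin k → ℤ), 0 < N ∧ ∀ j, (N : ℚ) * v j = (z j : ℚ) := by
  set N : ℕ := ∏ j, (v j).den with hN
  have hNpos : 0 < N := Finset.prod_pos fun j _ => (v j).pos
  have h : ∀ j, ∃ z : ℤ, (N : ℚ) * v j = (z : ℚ) := by
    intro j
    have hdvd : ((v j).den : ℤ) ∣ (N : ℤ) :=
      Int.natCast_dvd_natCast.mpr (Finset.dvd_prod_of_mem _ (Finset.mem_univ j))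
    obtain ⟨c, hc⟩ := hdvd
    refine ⟨c * (v j).num, ?_⟩
    have hden : ((v j).den : ℚ) ≠ 0 := by exact_mod_cast (v j).den_nz
    have : (N : ℚ) = ((v j).den : ℚ) * (c : ℚ) := by exact_mod_cast hc
    rw [this]
    push_cast
    rw [mul_assoc, mul_comm ((c:ℚ)) (v j), ← mul_assoc]
    rw [show ((v j).den : ℚ) * v j = ((v j).num : ℚ) by
      have h3 : ((v j).num : ℚ) / ((v j).den : ℚ) * ((v j).den : ℚ) = ((v j).num : ℚ) :=
        div_mul_cancel₀ _ hden
      rw [Rat.num_div_den (v j)] at h3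
      rw [mul_comm]; exact h3]
    ring
  choose z hz using h
  exact ⟨N, z, hNpos, hz⟩

/-- A Cauchy–Binet style expansion of `det (L * E)` over all row selections. -/
lemma aux_det_expand {l m : ℕ} (L : Matrix (Fin l) (Fin m) ℝ) (E : Matrix (Fin m) (Fin l) ℝ) :
    (L * E).det =
      ∑ r : Fin l → Fin m, (∏ i, L i (r i)) * (Matrix.of fun i ν => E (r i) ν).det := by
  have h : L * E = Matrix.of fun i => ∑ j : Fin m, L i j • E j := by
    ext i ν
    simp [Matrix.mul_apply, Finset.sum_apply]
  rw [h]
  calc (Matrix.of fun i => ∑ j : Fin m, L i j • E j).det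
      = Matrix.detRowAlternating (R := ℝ) (fun i => ∑ j : Fin m, L i j • E j) := rfl
    _ = ∑ r : Fin l → Fin m,
          Matrix.detRowAlternating (R := ℝ) (fun i => L i (r i) • E (r i)) :=
        (Matrix.detRowAlternating (R := ℝ) (n := Fin l)).toMultilinearMap.map_sum
          (g := fun i j => L i j • E j)
    _ = ∑ r : Fin l → Fin m,
          (∏ i, L i (r i)) • Matrix.detRowAlternating (R := ℝ) (fun i => E (r i)) := by
        refine Finset.sum_congr rfl fun r _ => ?_
        exact (Matrix.detRowAlternating (R := ℝ) (n := Fin l)).toMultilinearMap.map_smul_univ _ _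
    _ = ∑ r : Fin l → Fin m, (∏ i, L i (r i)) * (Matrix.of fun i ν => E (r i) ν).det := by
        simp [smul_eq_mul]
        rfl

/-- **Theorem 2.2** (first variation). Same setting as the main criterion, but the
non-vanishing assumption is on the matrices `θ ⬝ q n + lam ⬝ p n` for every integer
`l × (m+1)` block matrix `[θ | lam]` of rank `l`. -/
theorem stmt_1 (m l : ℕ) (hl : 1 ≤ l) (hlm : l ≤ m)
    (γ : Fin m → ℝ) (q : ℕ → Fin l → ℤ) (p : ℕ → Fin m → Fin l → ℤ)
    (ε : ℕ → Fin m → Fin l → ℝ)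
    (hε : ∀ n μ ν, ε n μ ν = (q n ν : ℝ) * γ μ - (p n μ ν : ℝ))
    (hdet : ∀ μs : Fin l → Fin m, StrictMono μs →
      Tendsto (fun n => (Matrix.of fun i ν => ε n (μs i) ν).det) atTop (nhds 0))
    (hnonsing : ∀ (θ : Fin l → ℤ) (lam : Matrix (Fin l) (Fin m) ℤ),
      ((Matrix.of fun (i : Fin l) (j : Fin (m + 1)) =>
          Fin.cases (θ i) (fun j' => lam i j') j).map (Int.cast : ℤ → ℚ)).rank = l →
      ∃ᶠ n in atTop,
        (Matrix.of fun (i : Fin l) (ν : Fin l) =>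
          θ i * q n ν + ∑ j : Fin m, lam i j * p n j ν).det ≠ 0) :
    ((2 + m - l : ℕ) : Cardinal) ≤
      Module.rank ℚ ↥(Submodule.span ℚ (insert (1 : ℝ) (Set.range γ))) := by
  by_contra hcon
  rw [not_le] at hcon
  -- finite dimensionality of the span
  have hfin : (insert (1 : ℝ) (Set.range γ)).Finite := (Set.finite_range γ).insert 1
  haveI : FiniteDimensional ℚ ↥(Submodule.span ℚ (insert (1 : ℝ) (Set.range γ))) :=
    FiniteDimensional.span_of_finite ℚ hfin
  rw [← Module.finrank_eq_rank, Nat.cast_lt] at hcon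
  -- the linear map
  set g : Fin (m + 1) → ℝ := Fin.cons (1 : ℝ) γ with hg
  set f : (Fin (m + 1) → ℚ) →ₗ[ℚ] ℝ := Fintype.linearCombination ℚ g with hf
  have hrange : LinearMap.range f = Submodule.span ℚ (insert (1 : ℝ) (Set.range γ)) := by
    rw [hf, Fintype.range_linearCombination]
    congr 1
    exact Fin.range_cons _ _
  have hrn := LinearMap.finrank_range_add_finrank_ker f
  rw [hrange, Module.finrank_fin_fun] at hrn
  have hker : l ≤ Module.finrank ℚ ↥(LinearMap.ker f) := by omega
  obtain ⟨w, hw⟩ := exists_linearIndependent_of_le_finrank hker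
  set r : Fin l → (Fin (m + 1) → ℚ) := fun i => (w i : Fin (m + 1) → ℚ) with hr
  have hrli : LinearIndependent ℚ r :=
    hw.map' (LinearMap.ker f).subtype (Submodule.ker_subtype _)
  -- clear denominators
  choose N z hNpos hz using fun i => aux_exists_int_smul (r i)
  set θ : Fin l → ℤ := fun i => z i 0 with hθ
  set lam : Matrix (Fin l) (Fin m) ℤ := Matrix.of fun i j => z i j.succ with hlam
  -- the kernel relations, with integer coefficients
  have hrel : ∀ i : Fin l, (θ i : ℝ) = -∑ j : Fin m, (lam i j : ℝ) * γ j := by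
    intro i
    have h0 : ∑ j, r i j • g j = 0 := by
      have hmem := (w i).2
      rw [LinearMap.mem_ker] at hmem
      exact hmem
    have h1 : ∑ j, ((z i j : ℚ)) • g j = 0 := by
      have : ∀ j, ((z i j : ℚ)) • g j = (N i : ℚ) • (r i j • g j) := fun j => by
        rw [← hz i j]; exact mul_smul _ _ _
      rw [Finset.sum_congr rfl fun j _ => this j, ← Finset.smul_sum, h0, smul_zero]
    rw [Fin.sum_univ_succ] at h1
    simp only [hg, Fin.cons_zero, Fin.cons_succ, Rat.smul_def, Rat.cast_intCast] at h1
    have h2 : (z i 0 : ℝ) + ∑ j : Fin m, (z i j.succ : ℝ) * γ j = 0 := by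
      simpa using h1
    have : (θ i : ℝ) + ∑ j : Fin m, (lam i j : ℝ) * γ j = 0 := h2
    linarith [this]
  -- the rank hypothesis holds
  have hrank : ((Matrix.of fun (i : Fin l) (j : Fin (m + 1)) =>
      Fin.cases (θ i) (fun j' => lam i j') j).map (Int.cast : ℤ → ℚ)).rank = l := by
    have hB : ((Matrix.of fun (i : Fin l) (j : Fin (m + 1)) =>
        Fin.cases (θ i) (fun j' => lam i j') j).map (Int.cast : ℤ → ℚ)) =
        Matrix.of fun i j => ((Units.mk0 ((N i : ℚ)) (by
          exact_mod_cast (hNpos i).ne')) : ℚˣ) • r i j := by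
      ext i j
      refine Fin.cases ?_ (fun j' => ?_) j <;>
        simp [hθ, hlam, Units.smul_def, ← hz i, Matrix.map_apply]
    rw [hB]
    have hli : LinearIndependent ℚ fun i =>
        (Matrix.of fun i j => ((Units.mk0 ((N i : ℚ)) (by
          exact_mod_cast (hNpos i).ne')) : ℚˣ) • r i j) i := by
      have := hrli.units_smul fun i => Units.mk0 ((N i : ℚ)) (by
          exact_mod_cast (hNpos i).ne')
      convert this using 2
      rfl
    have := hli.rank_matrix
    rwa [Fintype.card_fin] at this
  -- apply the non-singularity hypothesis
  have hfreq := hnonsing θ lam hrank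
  -- real matrices
  set Lm : Matrix (Fin l) (Fin m) ℝ := Matrix.of fun i j => (lam i j : ℝ) with hLm
  set Em : ℕ → Matrix (Fin m) (Fin l) ℝ := fun n => Matrix.of (ε n) with hEm
  -- each term in the Cauchy–Binet expansion tends to 0
  have hterm : ∀ rr : Fin l → Fin m,
      Tendsto (fun n => (Matrix.of fun i ν => (Em n) (rr i) ν).det) atTop (nhds 0) := by
    intro rr
    by_cases hinj : Function.Injective rr
    · -- sort the indices
      set s : Finset (Fin m) := Finset.univ.image rr with hs
      have hcard : s.card = l := by
        rw [hs, Finset.card_image_of_injective _ hinj, Finset.card_univ, Fintype.card_fin]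
      set e := s.orderIsoOfFin hcard with he
      set μs : Fin l → Fin m := fun i => (e i : Fin m) with hμs
      have hsm : StrictMono μs := fun a b hab => by
        exact_mod_cast e.strictMono hab
      have hmem : ∀ i, rr i ∈ s := fun i => Finset.mem_image_of_mem rr (Finset.mem_univ i)
      set σ' : Fin l → Fin l := fun i => e.symm ⟨rr i, hmem i⟩ with hσ'
      have hσinj : Function.Injective σ' := by
        intro a b hab
        exact hinj (by simpa [hσ'] using congrArg e hab)
      set σ : Equiv.Perm (Fin l) :=
        Equiv.ofBijective σ' ((Finite.injective_iff_bijective).mp hσinj) with hσ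
      have hcomp : ∀ i, μs (σ i) = rr i := by
        intro i
        show ((e (e.symm ⟨rr i, hmem i⟩)) : Fin m) = rr i
        simp
      have hperm : ∀ n, (Matrix.of fun i ν => (Em n) (rr i) ν).det =
          (Equiv.Perm.sign σ : ℤ) * (Matrix.of fun i ν => ε n (μs i) ν).det := by
        intro n
        have : (Matrix.of fun i ν => (Em n) (rr i) ν) =
            (Matrix.of fun i ν => ε n (μs i) ν).submatrix σ id := by
          ext i ν
          simp [Matrix.submatrix_apply, hcomp i, hEm]
        rw [this, Matrix.det_permute]
        try push_cast
        try ring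
      have h0 := (hdet μs hsm).const_mul ((Equiv.Perm.sign σ : ℤ) : ℝ)
      rw [mul_zero] at h0
      refine Tendsto.congr (fun n => ?_) h0
      rw [hperm n]
      try push_cast
      try ring
    · -- repeated rows: determinant is identically zero
      rw [Function.not_injective_iff] at hinj
      obtain ⟨a, b, hab, hne⟩ := hinj
      have : ∀ n, (Matrix.of fun i ν => (Em n) (rr i) ν).det = 0 := by
        intro n
        refine Matrix.det_zero_of_row_eq hne ?_
        funext ν
        simp [hab]
      simpa [funext this] using tendsto_const_nhds (x := (0:ℝ)) (f := atTop)
  -- the product determinant tends to 0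
  have hT : Tendsto (fun n => (Lm * Em n).det) atTop (nhds 0) := by
    have : (fun n => (Lm * Em n).det) = fun n =>
        ∑ rr : Fin l → Fin m, (∏ i, Lm i (rr i)) * (Matrix.of fun i ν => (Em n) (rr i) ν).det := by
      funext n
      exact aux_det_expand Lm (Em n)
    rw [this]
    have : Tendsto (fun n => ∑ rr : Fin l → Fin m,
        (∏ i, Lm i (rr i)) * (Matrix.of fun i ν => (Em n) (rr i) ν).det) atTop
        (nhds (∑ rr : Fin l → Fin m, (0:ℝ))) := by
      refine tendsto_finset_sum _ fun rr _ => ?_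
      simpa using (hterm rr).const_mul (∏ i, Lm i (rr i))
    simpa using this
  -- relate to the integer determinants
  have hMdet : ∀ n, (((Matrix.of fun (i : Fin l) (ν : Fin l) =>
      θ i * q n ν + ∑ j : Fin m, lam i j * p n j ν).det : ℤ) : ℝ) =
      (-1 : ℝ)^l * (Lm * Em n).det := by
    intro n
    have h1 : (((Matrix.of fun (i : Fin l) (ν : Fin l) =>
        θ i * q n ν + ∑ j : Fin m, lam i j * p n j ν).det : ℤ) : ℝ) =
        ((Matrix.of fun (i : Fin l) (ν : Fin l) =>
        θ i * q n ν + ∑ j : Fin m, lam i j * p n j ν).map (Int.cast : ℤ → ℝ)).det :=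
      RingHom.map_det (Int.castRingHom ℝ) _
    have hM : ((Matrix.of fun (i : Fin l) (ν : Fin l) =>
        θ i * q n ν + ∑ j : Fin m, lam i j * p n j ν).map (Int.cast : ℤ → ℝ)) =
        -(Lm * Em n) := by
      ext i ν
      simp only [Matrix.map_apply, Matrix.of_apply, Matrix.neg_apply, Matrix.mul_apply,
        hLm, hEm, hε n]
      push_cast
      have hT : ∑ j, ((lam i j : ℝ)) * ((q n ν : ℝ) * γ j - (p n j ν : ℝ)) =
          (q n ν : ℝ) * (∑ j, (lam i j : ℝ) * γ j) - ∑ j, (lam i j : ℝ) * (p n j ν : ℝ) := by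
        rw [Finset.mul_sum, ← Finset.sum_sub_distrib]
        exact Finset.sum_congr rfl fun j _ => by ring
      rw [hT, hrel i]
      ring
    rw [h1, hM, Matrix.det_neg, Fintype.card_fin]
  -- contradiction
  have hT2 : Tendsto (fun n => (((Matrix.of fun (i : Fin l) (ν : Fin l) =>
      θ i * q n ν + ∑ j : Fin m, lam i j * p n j ν).det : ℤ) : ℝ)) atTop (nhds 0) := by
    have := hT.const_mul ((-1 : ℝ)^l)
    rw [mul_zero] at this
    exact Tendsto.congr (fun n => (hMdet n).symm) this
  have hev : ∀ᶠ n in atTop, |(((Matrix.of fun (i : Fin l) (ν : Fin l) =>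
      θ i * q n ν + ∑ j : Fin m, lam i j * p n j ν).det : ℤ) : ℝ)| < 1 := by
    have habs := hT2.abs
    rw [abs_zero] at habs
    exact habs.eventually (gt_mem_nhds one_pos)
  obtain ⟨n, hne, hlt⟩ := (hfreq.and_eventually hev).exists
  have : (1 : ℝ) ≤ |(((Matrix.of fun (i : Fin l) (ν : Fin l) =>
      θ i * q n ν + ∑ j : Fin m, lam i j * p n j ν).det : ℤ) : ℝ)| := by
    rw [← Int.cast_abs]
    exact_mod_cast Int.one_le_abs hne
  linarith
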